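/- Let θ₂^∞, θ₃^∞ ∈ ℂ with θ₂^∞+θ₃^∞ = 0. Let I ⊆ ℝ be an open interval with 0 ∉ I and q₁,q₂,p₁,p₂,u : I → ℂ differentiable with u(t) ≠ 0 and q₁(t)²+q₂(t) ≠ 0 (so Q(t) is invertible). Define Q(t) = [[q₁, u],[−q₂/u, q₁]], P(t) = [[p₁/2, −p₂u],[(p₂q₂−θ₂^∞)/u, p₁/2]]. Define H(t; q₁,p₁,q₂,p₂) by tH := tr[P²Q² + PQ − Q − tQ⁻¹]. Then: (a) this trace is independent of u and is a rational function of (q₁,p₁,q₂,p₂) regular where q₁²+q₂ ≠ 0; (b) the matrix equations tQ′ = 2QPQ + Q and tP′ = −2PQP − P + I − tQ⁻² hold on I if and only if dqᵢ/dt = ∂H/∂pᵢ and dpᵢ/dt = −∂H/∂qᵢ for i = 1,2 and t(1/u)du/dt = 2p₁q₁ + 2p₂q₂ − 2p₂q₁² − 2θ₂^∞ + 1 hold on I. -/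

import Mathlib

/-!
The matrix Painlevé III(D₈) system `tQ′ = 2QPQ + Q`, `tP′ = −2PQP − P + I − tQ⁻²` is
equivalent to the Hamiltonian system for `H^Mat_{III(D₈)}` (with `tH = tr[P²Q² + PQ − Q − tQ⁻¹]`)
together with the gauge equation `t(1/u)du/dt = 2p₁q₁ + 2p₂q₂ − 2p₂q₁² − 2θ₂^∞ + 1`;
moreover the trace is independent of `u` and is a rational function of `(q₁,p₁,q₂,p₂)`
regular where `q₁² + q₂ ≠ 0`.
-/

open Matrix

noncomputable section

/-- Entrywise derivative of a matrix-valued function of a real variable. -/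
def matDeriv {m n : Type*} (F : ℝ → Matrix m n ℂ) (t : ℝ) : Matrix m n ℂ :=
  Matrix.of fun i j => deriv (fun s => F s i j) t

/-- `Q = [[q₁, u],[−q₂/u, q₁]]` with `(a,c,v) = (q₁,q₂,u)`. -/
def Qm (a c v : ℂ) : Matrix (Fin 2) (Fin 2) ℂ := !![a, v; -c/v, a]

/-- `P = [[p₁/2, −p₂u],[(p₂q₂−θ)/u, p₁/2]]` with `(b,d,c,v) = (p₁,p₂,q₂,u)`. -/
def Pm (b d c θ v : ℂ) : Matrix (Fin 2) (Fin 2) ℂ := !![b/2, -d*v; (d*c - θ)/v, b/2]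

/-- The trace `tr[P²Q² + PQ − Q − tQ⁻¹]` in coordinates `(a,b,c,d,v) = (q₁,p₁,q₂,p₂,u)`. -/
def trD8 (θi2 t a b c d v : ℂ) : ℂ :=
  (Pm b d c θi2 v * Pm b d c θi2 v * (Qm a c v * Qm a c v)
    + Pm b d c θi2 v * Qm a c v - Qm a c v - t • (Qm a c v)⁻¹).trace

/-- The Hamiltonian `H^Mat_{III(D₈)}(t; q₁,p₁,q₂,p₂)`, defined by `tH = trD8` at `u = 1`. -/
def HD8 (θi2 t a b c d : ℂ) : ℂ := t⁻¹ * trD8 θi2 t a b c d 1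

/- ## Auxiliary lemmas -/

lemma mat2_eq_iff (x y z w x' y' z' w' : ℂ) :
    (!![x,y;z,w] : Matrix (Fin 2) (Fin 2) ℂ) = !![x',y';z',w'] ↔
      (x = x' ∧ y = y' ∧ z = z' ∧ w = w') := by
  constructor
  · intro h
    exact ⟨congrFun (congrFun h 0) 0, congrFun (congrFun h 0) 1,
      congrFun (congrFun h 1) 0, congrFun (congrFun h 1) 1⟩
  · rintro ⟨h1,h2,h3,h4⟩; ext i j; fin_cases i <;> fin_cases j <;> simpa

lemma smul_mat2 (t x y z w : ℂ) : t • (!![x,y;z,w] : Matrix (Fin 2) (Fin 2) ℂ)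
    = !![t*x, t*y; t*z, t*w] := by
  ext i j; fin_cases i <;> fin_cases j <;> simp

lemma Qm_inv (a c v : ℂ) (hv : v ≠ 0) :
    (Qm a c v)⁻¹ = (a^2+c)⁻¹ • !![a, -v; c/v, a] := by
  have hvw : v * v⁻¹ = 1 := mul_inv_cancel₀ hv
  have hdet : (Qm a c v).det = a^2 + c := by
    simp only [Qm, Matrix.det_fin_two_of]
    field_simp
    ring
  rw [Matrix.inv_def, hdet, Ring.inverse_eq_inv']
  congr 1
  simp only [Qm, Matrix.adjugate_fin_two_of, neg_div, neg_neg]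

lemma trD8_eq (θ t a b c d v : ℂ) (hv : v ≠ 0) :
    trD8 θ t a b c d v =
      a^2*b^2/2 - b^2*c/2 + a*b + 4*a*b*c*d - 2*a*b*θ + 2*a^2*d*θ - 2*a^2*c*d^2
        + 2*c^2*d^2 + 2*c*d - 2*c*d*θ - θ - 2*a - 2*a*t/(a^2+c) := by
  have hvw : v * v⁻¹ = 1 := mul_inv_cancel₀ hv
  have t1 : (Pm b d c θ v * Pm b d c θ v * (Qm a c v * Qm a c v)).trace
      = a^2*b^2/2 - b^2*c/2 + 4*a*b*c*d - 2*a*b*θ + 2*a^2*d*θ - 2*a^2*c*d^2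
        + 2*c^2*d^2 - 2*c*d*θ := by
    rw [Matrix.trace_fin_two]
    simp [Qm, Pm, Matrix.mul_apply, Fin.sum_univ_two]
    linear_combination (-2*c*d*θ - 2*c*d*v*v⁻¹*θ + 2*c^2*d^2 + 2*c^2*d^2*v*v⁻¹
      - (1/2)*b^2*c - 2*a*b*θ + 4*a*b*c*d + 2*a^2*d*θ - 2*a^2*c*d^2) * hvw
  have t2 : (Pm b d c θ v * Qm a c v).trace = a*b + 2*c*d - θ := by
    rw [Matrix.trace_fin_two]
    simp [Qm, Pm, Matrix.mul_apply, Fin.sum_univ_two]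
    linear_combination (-θ + 2*c*d) * hvw
  have t3 : (Qm a c v).trace = 2*a := by
    rw [Qm, Matrix.trace_fin_two_of]; ring
  have t4 : ((Qm a c v)⁻¹).trace = 2*a/(a^2+c) := by
    rw [Qm_inv a c v hv, smul_mat2, Matrix.trace_fin_two_of]
    ring
  rw [trD8, Matrix.trace_sub, Matrix.trace_sub, Matrix.trace_add, Matrix.trace_smul,
    t1, t2, t3, t4]
  simp only [smul_eq_mul]
  ring

lemma RHSQ_eq (θ a b c d v : ℂ) (hv : v ≠ 0) :
    (2:ℂ) • (Qm a c v * Pm b d c θ v * Qm a c v) + Qm a c v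
    = !![a^2*b - b*c + a - 2*a*θ + 4*a*c*d, v*(1 - 2*θ + 2*c*d + 2*a*b - 2*a^2*d);
        (-c - 2*c^2*d - 2*a*b*c - 2*a^2*θ + 2*a^2*c*d)*v⁻¹,
        a^2*b - b*c + a - 2*a*θ + 4*a*c*d] := by
  have hvw : v * v⁻¹ = 1 := mul_inv_cancel₀ hv
  rw [← Matrix.ext_iff]
  simp only [Fin.forall_fin_two]
  simp [Qm, Pm, Matrix.mul_apply, Fin.sum_univ_two]
  refine ⟨⟨?_, ?_⟩, ?_, ?_⟩
  · linear_combination ((-1)*b*c + (-2)*a*θ + (4)*a*c*d) * hvw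
  · linear_combination ((-2)*v*θ + (2)*c*d*v) * hvw
  · linear_combination ((-2)*c^2*d*v⁻¹) * hvw
  · linear_combination ((-1)*b*c + (-2)*a*θ + (4)*a*c*d) * hvw

lemma RHSP_eq (θ t a b c d v : ℂ) (hv : v ≠ 0) :
    -((2:ℂ) • (Pm b d c θ v * Qm a c v * Pm b d c θ v)) - Pm b d c θ v
      + (1 : Matrix (Fin 2) (Fin 2) ℂ) - t • ((Qm a c v)⁻¹ * (Qm a c v)⁻¹)
    = !![(1 - b/2 + b*θ - 2*b*c*d - 2*a*d*θ + 2*a*c*d^2 - a*b^2/2)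
          + t*(c - a^2)*((a^2+c)⁻¹)^2,
        v*((d + 2*c*d^2 - b^2/2 + 2*a*b*d) + 2*a*t*((a^2+c)⁻¹)^2);
        ((θ - 2*θ^2 - c*d + 4*c*d*θ - 2*c^2*d^2 + b^2*c/2 + 2*a*b*θ - 2*a*b*c*d)
          - 2*a*t*c*((a^2+c)⁻¹)^2)*v⁻¹,
        (1 - b/2 + b*θ - 2*b*c*d - 2*a*d*θ + 2*a*c*d^2 - a*b^2/2)
          + t*(c - a^2)*((a^2+c)⁻¹)^2] := by
  have hvw : v * v⁻¹ = 1 := mul_inv_cancel₀ hv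
  have hsq : ((a^2+c)⁻¹)^2 = ((a^2+c)*(a^2+c))⁻¹ := by rw [sq, mul_inv]
  rw [Qm_inv a c v hv, Matrix.one_fin_two, ← Matrix.ext_iff]
  simp only [Fin.forall_fin_two]
  simp [Qm, Pm, Matrix.mul_apply, Fin.sum_univ_two]
  refine ⟨⟨?_, ?_⟩, ?_, ?_⟩
  · linear_combination (b*θ - 2*b*c*d - 2*a*d*θ + 2*a*c*d^2 + t*c*((a^2+c)⁻¹)^2) * hvw
      + (t*(c - a^2)) * hsq
  · linear_combination (2*c*d^2*v) * hvw + (2*a*v*t) * hsq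
  · linear_combination (-2*v⁻¹*θ^2 + 4*c*d*v⁻¹*θ - 2*c^2*d^2*v⁻¹) * hvw
      + (-2*a*c*t*v⁻¹) * hsq
  · linear_combination (b*θ - 2*b*c*d - 2*a*d*θ + 2*a*c*d^2 + t*c*((a^2+c)⁻¹)^2) * hvw
      + (t*(c - a^2)) * hsq

lemma hasDerivAt_quad (p q r x : ℂ) :
    HasDerivAt (fun y : ℂ => p*y^2 + q*y + r) (p*(2*x) + q) x := by
  have h1 : HasDerivAt (fun y : ℂ => y^2) (2*x) x := by simpa using hasDerivAt_pow 2 x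
  have h2 : HasDerivAt (fun y : ℂ => y) 1 x := hasDerivAt_id x
  have h := ((HasDerivAt.const_mul p h1).add (HasDerivAt.const_mul q h2)).add_const r
  simpa using h

lemma deriv_HD8_b (θ t a b c d : ℂ) :
    deriv (fun x => HD8 θ t a x c d) b
      = t⁻¹ * (a^2*b - b*c + a + 4*a*c*d - 2*a*θ) := by
  have hfun : (fun x => HD8 θ t a x c d)
      = fun x => t⁻¹*((a^2/2 - c/2)*x^2 + (a + 4*a*c*d - 2*a*θ)*x
          + (2*a^2*d*θ - 2*a^2*c*d^2 + 2*c^2*d^2 + 2*c*d - 2*c*d*θ - θ - 2*a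
              - 2*a*t/(a^2+c))) := by
    funext x
    simp only [HD8]
    rw [trD8_eq θ t a x c d 1 one_ne_zero]
    ring
  rw [hfun]
  have h := HasDerivAt.const_mul t⁻¹ (hasDerivAt_quad (a^2/2 - c/2) (a + 4*a*c*d - 2*a*θ)
    (2*a^2*d*θ - 2*a^2*c*d^2 + 2*c^2*d^2 + 2*c*d - 2*c*d*θ - θ - 2*a - 2*a*t/(a^2+c)) b)
  rw [h.deriv]
  ring

lemma deriv_HD8_d (θ t a b c d : ℂ) :
    deriv (fun x => HD8 θ t a b c x) d
      = t⁻¹ * (4*a*b*c + 4*c^2*d - 4*a^2*c*d + 2*a^2*θ - 2*c*θ + 2*c) := by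
  have hfun : (fun x => HD8 θ t a b c x)
      = fun x => t⁻¹*((2*c^2 - 2*a^2*c)*x^2 + (4*a*b*c + 2*a^2*θ + 2*c - 2*c*θ)*x
          + (a^2*b^2/2 - b^2*c/2 + a*b - 2*a*b*θ - θ - 2*a - 2*a*t/(a^2+c))) := by
    funext x
    simp only [HD8]
    rw [trD8_eq θ t a b c x 1 one_ne_zero]
    ring
  rw [hfun]
  have h := HasDerivAt.const_mul t⁻¹ (hasDerivAt_quad (2*c^2 - 2*a^2*c)
    (4*a*b*c + 2*a^2*θ + 2*c - 2*c*θ)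
    (a^2*b^2/2 - b^2*c/2 + a*b - 2*a*b*θ - θ - 2*a - 2*a*t/(a^2+c)) d)
  rw [h.deriv]
  ring

lemma deriv_HD8_a (θ t a b c d : ℂ) (hD : a^2 + c ≠ 0) :
    deriv (fun x => HD8 θ t x b c d) a
      = t⁻¹ * (a*b^2 + b + 4*b*c*d - 2*b*θ + 4*a*d*θ - 4*a*c*d^2 - 2
          - (2*t*(a^2+c) - 4*t*a^2)/(a^2+c)^2) := by
  have hfun : (fun x => HD8 θ t x b c d)
      = fun x => t⁻¹*((b^2/2 + 2*d*θ - 2*c*d^2)*x^2 + (b + 4*b*c*d - 2*b*θ - 2)*x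
          + (-(b^2*c/2) + 2*c^2*d^2 + 2*c*d - 2*c*d*θ - θ) - 2*t*x/(x^2+c)) := by
    funext x
    simp only [HD8]
    rw [trD8_eq θ t x b c d 1 one_ne_zero]
    ring
  rw [hfun]
  have h1 : HasDerivAt (fun y : ℂ => 2*t*y) (2*t) a := by
    simpa using HasDerivAt.const_mul (2*t) (hasDerivAt_id a)
  have h2 : HasDerivAt (fun y : ℂ => y^2 + c) (2*a) a := by
    simpa using (hasDerivAt_pow 2 a).add_const c
  have hdiv : HasDerivAt (fun y : ℂ => 2*t*y/(y^2+c))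
      ((2*t*(a^2+c) - 2*t*a*(2*a))/(a^2+c)^2) a := by
    exact h1.div h2 hD
  have h := HasDerivAt.const_mul t⁻¹ (((hasDerivAt_quad (b^2/2 + 2*d*θ - 2*c*d^2)
    (b + 4*b*c*d - 2*b*θ - 2) (-(b^2*c/2) + 2*c^2*d^2 + 2*c*d - 2*c*d*θ - θ) a).sub hdiv))
  exact h.deriv.trans (by ring)

lemma deriv_HD8_c (θ t a b c d : ℂ) (hD : a^2 + c ≠ 0) :
    deriv (fun x => HD8 θ t a b x d) c
      = t⁻¹ * (2*d - 2*d*θ + 4*c*d^2 - b^2/2 + 4*a*b*d - 2*a^2*d^2 + 2*a*t/(a^2+c)^2) := by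
  have hfun : (fun x => HD8 θ t a b x d)
      = fun x => t⁻¹*((2*d^2)*x^2 + (2*d - 2*d*θ - b^2/2 + 4*a*b*d - 2*a^2*d^2)*x
          + (a^2*b^2/2 + a*b - 2*a*b*θ + 2*a^2*d*θ - θ - 2*a) - 2*a*t/(a^2+x)) := by
    funext x
    simp only [HD8]
    rw [trD8_eq θ t a b x d 1 one_ne_zero]
    ring
  rw [hfun]
  have h1 : HasDerivAt (fun _ : ℂ => 2*a*t) 0 c := hasDerivAt_const c (2*a*t)
  have h2 : HasDerivAt (fun y : ℂ => a^2 + y) 1 c := by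
    simpa using (hasDerivAt_id c).const_add (a^2)
  have hdiv : HasDerivAt (fun y : ℂ => 2*a*t/(a^2+y)) (-(2*a*t)/(a^2+c)^2) c := by
    have := h1.div h2 hD
    exact this.congr_deriv (by ring)
  have h := HasDerivAt.const_mul t⁻¹ (((hasDerivAt_quad (2*d^2)
    (2*d - 2*d*θ - b^2/2 + 4*a*b*d - 2*a^2*d^2)
    (a^2*b^2/2 + a*b - 2*a*b*θ + 2*a^2*d*θ - θ - 2*a) c).sub hdiv))
  exact h.deriv.trans (by ring)

theorem matrix_PIII_D8_Hamiltonian_form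
    (θi2 θi3 : ℂ) (hFuchs : θi2 + θi3 = 0)
    (α β : ℝ) (h0 : (0:ℝ) ∉ Set.Ioo α β)
    (q1 q2 p1 p2 u : ℝ → ℂ)
    (hdiff : ∀ t ∈ Set.Ioo α β, DifferentiableAt ℝ q1 t ∧ DifferentiableAt ℝ q2 t ∧
      DifferentiableAt ℝ p1 t ∧ DifferentiableAt ℝ p2 t ∧ DifferentiableAt ℝ u t)
    (hu : ∀ t ∈ Set.Ioo α β, u t ≠ 0)
    (hdet : ∀ t ∈ Set.Ioo α β, (q1 t) ^ 2 + q2 t ≠ 0)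
    (Q P : ℝ → Matrix (Fin 2) (Fin 2) ℂ)
    (hQ : ∀ t : ℝ, Q t = Qm (q1 t) (q2 t) (u t))
    (hP : ∀ t : ℝ, P t = Pm (p1 t) (p2 t) (q2 t) θi2 (u t)) :
    -- (a) the trace is independent of u, and is a rational function of (q₁,p₁,q₂,p₂)
    -- regular where q₁² + q₂ ≠ 0
    ((∀ t a b c d v w : ℂ, v ≠ 0 → w ≠ 0 → a^2 + c ≠ 0 →
        trD8 θi2 t a b c d v = trD8 θi2 t a b c d w) ∧
      (∀ t : ℂ, ∃ (k : ℕ) (F : MvPolynomial (Fin 4) ℂ), ∀ a b c d v : ℂ, v ≠ 0 →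
        a^2 + c ≠ 0 →
        trD8 θi2 t a b c d v = MvPolynomial.eval ![a, b, c, d] F / (a^2 + c)^k)) ∧
    -- (b) matrix ODEs ↔ Hamiltonian system + gauge equation
    (((∀ t ∈ Set.Ioo α β,
          (t : ℂ) • matDeriv Q t = (2:ℂ) • (Q t * P t * Q t) + Q t) ∧
        (∀ t ∈ Set.Ioo α β,
          (t : ℂ) • matDeriv P t
            = -((2:ℂ) • (P t * Q t * P t)) - P t + (1 : Matrix (Fin 2) (Fin 2) ℂ)
              - (t : ℂ) • ((Q t)⁻¹ * (Q t)⁻¹)))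
      ↔
      (∀ t ∈ Set.Ioo α β,
        deriv q1 t = deriv (fun x => HD8 θi2 (t:ℂ) (q1 t) x (q2 t) (p2 t)) (p1 t) ∧
        deriv p1 t = -(deriv (fun x => HD8 θi2 (t:ℂ) x (p1 t) (q2 t) (p2 t)) (q1 t)) ∧
        deriv q2 t = deriv (fun x => HD8 θi2 (t:ℂ) (q1 t) (p1 t) (q2 t) x) (p2 t) ∧
        deriv p2 t = -(deriv (fun x => HD8 θi2 (t:ℂ) (q1 t) (p1 t) x (p2 t)) (q2 t)) ∧
        (t : ℂ) * ((u t)⁻¹ * deriv u t)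
          = 2 * p1 t * q1 t + 2 * p2 t * q2 t - 2 * p2 t * (q1 t)^2 - 2*θi2 + 1)) := by
  constructor
  · -- part (a)
    constructor
    · intro t a b c d v w hv hw _
      rw [trD8_eq θi2 t a b c d v hv, trD8_eq θi2 t a b c d w hw]
    · intro t
      refine ⟨1,
        (MvPolynomial.X 0 ^ 2 + MvPolynomial.X 2) *
          (MvPolynomial.C (1/2 : ℂ) * MvPolynomial.X 0 ^ 2 * MvPolynomial.X 1 ^ 2
            - MvPolynomial.C (1/2 : ℂ) * MvPolynomial.X 1 ^ 2 * MvPolynomial.X 2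
            + MvPolynomial.X 0 * MvPolynomial.X 1
            + MvPolynomial.C 4 * MvPolynomial.X 0 * MvPolynomial.X 1 * MvPolynomial.X 2
                * MvPolynomial.X 3
            - MvPolynomial.C (2*θi2) * MvPolynomial.X 0 * MvPolynomial.X 1
            + MvPolynomial.C (2*θi2) * MvPolynomial.X 0 ^ 2 * MvPolynomial.X 3
            - MvPolynomial.C 2 * MvPolynomial.X 0 ^ 2 * MvPolynomial.X 2
                * MvPolynomial.X 3 ^ 2
            + MvPolynomial.C 2 * MvPolynomial.X 2 ^ 2 * MvPolynomial.X 3 ^ 2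
            + MvPolynomial.C 2 * MvPolynomial.X 2 * MvPolynomial.X 3
            - MvPolynomial.C (2*θi2) * MvPolynomial.X 2 * MvPolynomial.X 3
            - MvPolynomial.C θi2 - MvPolynomial.C 2 * MvPolynomial.X 0)
          - MvPolynomial.C (2*t) * MvPolynomial.X 0, ?_⟩
      intro a b c d v hv hD
      rw [trD8_eq θi2 t a b c d v hv]
      simp only [map_add, map_sub, _root_.map_mul, map_pow, MvPolynomial.eval_C, MvPolynomial.eval_X,
        Matrix.cons_val_zero, Matrix.cons_val_one, Matrix.head_cons, pow_one,
        Matrix.cons_val_two, Matrix.tail_cons, Matrix.cons_val_three, Matrix.head_fin_const]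
      field_simp
  · -- part (b)
    have key : ∀ t ∈ Set.Ioo α β,
        (((t : ℂ) • matDeriv Q t = (2:ℂ) • (Q t * P t * Q t) + Q t) ∧
          ((t : ℂ) • matDeriv P t
            = -((2:ℂ) • (P t * Q t * P t)) - P t + (1 : Matrix (Fin 2) (Fin 2) ℂ)
              - (t : ℂ) • ((Q t)⁻¹ * (Q t)⁻¹)))
        ↔
        (deriv q1 t = deriv (fun x => HD8 θi2 (t:ℂ) (q1 t) x (q2 t) (p2 t)) (p1 t) ∧
          deriv p1 t = -(deriv (fun x => HD8 θi2 (t:ℂ) x (p1 t) (q2 t) (p2 t)) (q1 t)) ∧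
          deriv q2 t = deriv (fun x => HD8 θi2 (t:ℂ) (q1 t) (p1 t) (q2 t) x) (p2 t) ∧
          deriv p2 t = -(deriv (fun x => HD8 θi2 (t:ℂ) (q1 t) (p1 t) x (p2 t)) (q2 t)) ∧
          (t : ℂ) * ((u t)⁻¹ * deriv u t)
            = 2 * p1 t * q1 t + 2 * p2 t * q2 t - 2 * p2 t * (q1 t)^2 - 2*θi2 + 1) := by
      intro t ht
      obtain ⟨hq1, hq2, hp1, hp2, hud⟩ := hdiff t ht
      have hvt : u t ≠ 0 := hu t ht
      have hDt : (q1 t)^2 + q2 t ≠ 0 := hdet t ht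
      have htR : (t:ℝ) ≠ 0 := by rintro rfl; exact h0 ht
      have htC : (t:ℂ) ≠ 0 := Complex.ofReal_ne_zero.mpr htR
      have hvw : u t * (u t)⁻¹ = 1 := mul_inv_cancel₀ hvt
      have hts : (t:ℂ) * (t:ℂ)⁻¹ = 1 := mul_inv_cancel₀ htC
      have hDe : ((q1 t)^2 + q2 t) * ((q1 t)^2 + q2 t)⁻¹ = 1 := mul_inv_cancel₀ hDt
      have hsq : (((q1 t)^2 + q2 t)⁻¹)^2 = (((q1 t)^2 + q2 t)*((q1 t)^2 + q2 t))⁻¹ := by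
        rw [sq, mul_inv]
      have hQ00 : (fun s => Q s 0 0) = q1 := funext fun s => by rw [hQ]; simp [Qm]
      have hQ01 : (fun s => Q s 0 1) = u := funext fun s => by rw [hQ]; simp [Qm]
      have hQ10 : (fun s => Q s 1 0) = fun s => -q2 s / u s :=
        funext fun s => by rw [hQ]; simp [Qm]
      have hQ11 : (fun s => Q s 1 1) = q1 := funext fun s => by rw [hQ]; simp [Qm]
      have hP00 : (fun s => P s 0 0) = fun s => p1 s / 2 :=
        funext fun s => by rw [hP]; simp [Pm]
      have hP01 : (fun s => P s 0 1) = fun s => -p2 s * u s :=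
        funext fun s => by rw [hP]; simp [Pm]
      have hP10 : (fun s => P s 1 0) = fun s => (p2 s * q2 s - θi2) / u s :=
        funext fun s => by rw [hP]; simp [Pm]
      have hP11 : (fun s => P s 1 1) = fun s => p1 s / 2 :=
        funext fun s => by rw [hP]; simp [Pm]
      have hQd : matDeriv Q t = !![deriv q1 t, deriv u t;
          (-(deriv q2 t) * u t - -(q2 t) * deriv u t) / u t ^ 2, deriv q1 t] := by
        rw [← Matrix.ext_iff]
        simp only [Fin.forall_fin_two, matDeriv, Matrix.of_apply, Matrix.cons_val',
          Matrix.cons_val_zero, Matrix.cons_val_one, Matrix.head_cons, Matrix.head_fin_const,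
          Matrix.empty_val', Matrix.cons_val_fin_one]
        refine ⟨⟨?_, ?_⟩, ?_, ?_⟩
        · rw [hQ00]
        · rw [hQ01]
        · rw [hQ10]; exact (hq2.hasDerivAt.neg.div hud.hasDerivAt hvt).deriv
        · rw [hQ11]
      have hPd : matDeriv P t = !![deriv p1 t / 2,
          -(deriv p2 t) * u t + -(p2 t) * deriv u t;
          ((deriv p2 t * q2 t + p2 t * deriv q2 t) * u t
            - (p2 t * q2 t - θi2) * deriv u t) / u t ^ 2, deriv p1 t / 2] := by
        rw [← Matrix.ext_iff]
        simp only [Fin.forall_fin_two, matDeriv, Matrix.of_apply, Matrix.cons_val',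
          Matrix.cons_val_zero, Matrix.cons_val_one, Matrix.head_cons, Matrix.head_fin_const,
          Matrix.empty_val', Matrix.cons_val_fin_one]
        refine ⟨⟨?_, ?_⟩, ?_, ?_⟩
        · rw [hP00]; exact (hp1.hasDerivAt.div_const 2).deriv
        · rw [hP01]; exact (hp2.hasDerivAt.neg.mul hud.hasDerivAt).deriv
        · rw [hP10]
          exact (((hp2.hasDerivAt.mul hq2.hasDerivAt).sub_const θi2).div
            hud.hasDerivAt hvt).deriv
        · rw [hP11]; exact (hp1.hasDerivAt.div_const 2).deriv
      rw [hQd, hPd, hQ t, hP t,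
        RHSQ_eq θi2 (q1 t) (p1 t) (q2 t) (p2 t) (u t) hvt,
        RHSP_eq θi2 (t:ℂ) (q1 t) (p1 t) (q2 t) (p2 t) (u t) hvt,
        smul_mat2, smul_mat2, mat2_eq_iff, mat2_eq_iff,
        deriv_HD8_b θi2 (t:ℂ) (q1 t) (p1 t) (q2 t) (p2 t),
        deriv_HD8_a θi2 (t:ℂ) (q1 t) (p1 t) (q2 t) (p2 t) hDt,
        deriv_HD8_d θi2 (t:ℂ) (q1 t) (p1 t) (q2 t) (p2 t),
        deriv_HD8_c θi2 (t:ℂ) (q1 t) (p1 t) (q2 t) (p2 t) hDt]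
      constructor
      · rintro ⟨⟨e1, e2, e3, -⟩, f1, f2, f3, -⟩
        refine ⟨?_, ?_, ?_, ?_, ?_⟩
        · linear_combination ((1)*(t:ℂ)⁻¹) * e1 + ((-1)*(deriv q1 t)) * hts
        · linear_combination ((2)*(t:ℂ)⁻¹) * f1 + ((-1)*(deriv p1 t)) * hts + (2*(t:ℂ)*(t:ℂ)⁻¹*(q2 t - (q1 t)^2)) * hsq
        · linear_combination ((-1)*(u t)^2*(u t)⁻¹*(t:ℂ)⁻¹) * e3 + ((1)*(q2 t)*(u t)⁻¹*(t:ℂ)⁻¹) * e2 + ((2)*(q2 t)*(t:ℂ)⁻¹ + (-2)*(q2 t)*(t:ℂ)⁻¹*θi2 + (1)*(q2 t)*(u t)*(u t)⁻¹*(t:ℂ)⁻¹ + (4)*(q2 t)^2*(p2 t)*(t:ℂ)⁻¹ + (2)*(q2 t)^2*(p2 t)*(u t)*(u t)⁻¹*(t:ℂ)⁻¹ + (4)*(q1 t)*(p1 t)*(q2 t)*(t:ℂ)⁻¹ + (2)*(q1 t)*(p1 t)*(q2 t)*(u t)*(u t)⁻¹*(t:ℂ)⁻¹ + (2)*(q1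 t)^2*(t:ℂ)⁻¹*θi2 + (2)*(q1 t)^2*(u t)*(u t)⁻¹*(t:ℂ)⁻¹*θi2 + (-4)*(q1 t)^2*(q2 t)*(p2 t)*(t:ℂ)⁻¹ + (-2)*(q1 t)^2*(q2 t)*(p2 t)*(u t)*(u t)⁻¹*(t:ℂ)⁻¹ + (-1)*(t:ℂ)*(t:ℂ)⁻¹*(deriv q2 t) + (-1)*(t:ℂ)*(u t)*(u t)⁻¹*(t:ℂ)⁻¹*(deriv q2 t) + (-1)*(t:ℂ)*(u t)^2*(u t)⁻¹^2*(t:ℂ)⁻¹*(deriv q2 t) + (1)*(t:ℂ)*(q2 t)*(u t)⁻¹*(t:ℂ)⁻¹*(deriv u t) + (1)*(t:ℂ)*(q2 t)*(u t)*(u t)⁻¹^2*(t:ℂ)⁻¹*(deriv u t)) * hvw + ((-1)*(deriv q2 t)) * hts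
        · linear_combination ((-1)*(u t)⁻¹*(t:ℂ)⁻¹) * f2 + ((-1)*(p2 t)*(u t)⁻¹*(t:ℂ)⁻¹) * e2 + ((-2)*(p2 t)*(t:ℂ)⁻¹ + (2)*(p2 t)*(t:ℂ)⁻¹*θi2 + (-4)*(q2 t)*(p2 t)^2*(t:ℂ)⁻¹ + (1/2)*(p1 t)^2*(t:ℂ)⁻¹ + (-4)*(q1 t)*(p1 t)*(p2 t)*(t:ℂ)⁻¹ + (2)*(q1 t)^2*(p2 t)^2*(t:ℂ)⁻¹ + (-1)*(t:ℂ)*(t:ℂ)⁻¹*(deriv p2 t) + (-2)*(t:ℂ)*(q1 t)*((q1 t)^2 + q2 t)⁻¹^2*(t:ℂ)⁻¹) * hvw + ((-1)*(deriv p2 t)) * hts + (-2*(t:ℂ)*(t:ℂ)⁻¹*(q1 t)) * hsq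
        · linear_combination ((1)*(u t)⁻¹) * e2 + ((1) + (-2)*θi2 + (2)*(q2 t)*(p2 t) + (2)*(q1 t)*(p1 t) + (-2)*(q1 t)^2*(p2 t)) * hvw
      · rintro ⟨g1, g2, g3, g4, g5⟩
        refine ⟨⟨?_, ?_, ?_, ?_⟩, ?_, ?_, ?_, ?_⟩
        · linear_combination ((1)*(t:ℂ)) * g1 + ((-1)*(p1 t)*(q2 t) + (1)*(q1 t) + (-2)*(q1 t)*θi2 + (4)*(q1 t)*(q2 t)*(p2 t) + (1)*(q1 t)^2*(p1 t)) * hts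
        · linear_combination ((1)*(u t)) * g5 + ((-1)*(t:ℂ)*(deriv u t)) * hvw
        · linear_combination ((-1)*(t:ℂ)*(u t)⁻¹) * g3 + ((1)*(q2 t)*(u t)⁻¹) * g5 + ((-1)*(t:ℂ)*(u t)⁻¹*(deriv q2 t)) * hvw + ((-2)*(q2 t)*(u t)⁻¹ + (2)*(q2 t)*(u t)⁻¹*θi2 + (-4)*(q2 t)^2*(p2 t)*(u t)⁻¹ + (-4)*(q1 t)*(p1 t)*(q2 t)*(u t)⁻¹ + (-2)*(q1 t)^2*(u t)⁻¹*θi2 + (4)*(q1 t)^2*(q2 t)*(p2 t)*(u t)⁻¹) * hts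
        · linear_combination ((1)*(t:ℂ)) * g1 + ((-1)*(p1 t)*(q2 t) + (1)*(q1 t) + (-2)*(q1 t)*θi2 + (4)*(q1 t)*(q2 t)*(p2 t) + (1)*(q1 t)^2*(p1 t)) * hts
        · linear_combination ((1/2)*(t:ℂ)) * g2 + ((1)*(t:ℂ)*((q1 t)^2 + q2 t)⁻¹ + (-1)*(t:ℂ)^2*((q1 t)^2 + q2 t)⁻¹*(t:ℂ)⁻¹) * hDe + ((1) + (-1/2)*(p1 t) + (1)*(p1 t)*θi2 + (-2)*(p1 t)*(q2 t)*(p2 t) + (-2)*(q1 t)*(p2 t)*θi2 + (2)*(q1 t)*(q2 t)*(p2 t)^2 + (-1/2)*(q1 t)*(p1 t)^2 + (-1)*(t:ℂ)*((q1 t)^2 + q2 t)⁻¹ + (2)*(t:ℂ)*(q2 t)*((q1 t)^2 + q2 t)⁻¹^2) * hts + ((t:ℂ)^2*(t:ℂ)⁻¹*((q1 t)^2 - q2 t)) * hsq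
        · linear_combination ((-1)*(t:ℂ)*(u t)) * g4 + ((-1)*(p2 t)*(u t)) * g5 + ((1)*(t:ℂ)*(p2 t)*(deriv u t)) * hvw + ((2)*(p2 t)*(u t) + (-2)*(p2 t)*(u t)*θi2 + (4)*(q2 t)*(p2 t)^2*(u t) + (-1/2)*(p1 t)^2*(u t) + (4)*(q1 t)*(p1 t)*(p2 t)*(u t) + (-2)*(q1 t)^2*(p2 t)^2*(u t) + (2)*(t:ℂ)*(q1 t)*(u t)*((q1 t)^2 + q2 t)⁻¹^2) * hts + (-2*(t:ℂ)^2*(u t)*(t:ℂ)⁻¹*(q1 t)) * hsq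
        · linear_combination ((1)*(t:ℂ)*(q2 t)*(u t)⁻¹) * g4 + ((1)*(t:ℂ)*(p2 t)*(u t)⁻¹) * g3 + ((1)*(u t)⁻¹*θi2 + (-1)*(q2 t)*(p2 t)*(u t)⁻¹) * g5 + ((1)*(t:ℂ)*(p2 t)*(u t)⁻¹*(deriv q2 t) + (1)*(t:ℂ)*(q2 t)*(u t)⁻¹*(deriv p2 t)) * hvw + ((1/2)*(p1 t)^2*(q2 t)*(u t)⁻¹ + (2)*(q1 t)^2*(p2 t)*(u t)⁻¹*θi2 + (-2)*(q1 t)^2*(q2 t)*(p2 t)^2*(u t)⁻¹ + (-2)*(t:ℂ)*(q1 t)*(q2 t)*(u t)⁻¹*((q1 t)^2 + q2 t)⁻¹^2) * hts + (2*(t:ℂ)^2*(q2 t)*(u t)⁻¹*(t:ℂ)⁻¹*(q1 t)) * hsq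
        · linear_combination ((1/2)*(t:ℂ)) * g2 + ((1)*(t:ℂ)*((q1 t)^2 + q2 t)⁻¹ + (-1)*(t:ℂ)^2*((q1 t)^2 + q2 t)⁻¹*(t:ℂ)⁻¹) * hDe + ((1) + (-1/2)*(p1 t) + (1)*(p1 t)*θi2 + (-2)*(p1 t)*(q2 t)*(p2 t) + (-2)*(q1 t)*(p2 t)*θi2 + (2)*(q1 t)*(q2 t)*(p2 t)^2 + (-1/2)*(q1 t)*(p1 t)^2 + (-1)*(t:ℂ)*((q1 t)^2 + q2 t)⁻¹ + (2)*(t:ℂ)*(q2 t)*((q1 t)^2 + q2 t)⁻¹^2) * hts + ((t:ℂ)^2*(t:ℂ)⁻¹*((q1 t)^2 - q2 t)) * hsq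
    constructor
    · rintro ⟨h1, h2⟩ t ht
      exact (key t ht).mp ⟨h1 t ht, h2 t ht⟩
    · intro h
      exact ⟨fun t ht => ((key t ht).mpr (h t ht)).1, fun t ht => ((key t ht).mpr (h t ht)).2⟩

end
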